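/- arXiv:1410.5554 — 2 statements merged into one kernel-verified Lean document; each statement's English description precedes it below -/
import Mathlib

section
/- Let U be a ℤ₊-valued long-tailed random variable (lim_{k→∞} P(U>k+1)/P(U>k) = 1) such that the probability mass sequence {P(U=k)} is eventually nonincreasing. Then for any positive integer h, any l₀ ∈ ℤ₊ and any ν ∈ {0,1,…,h−1}, lim_{k→∞} (Σ_{l=l₀}^{∞} P(U = k + l·h + ν)) / P(U > k) = 1/h. -/
/-!
Write `c = l₀ h + ν` and `S k = Σ_l p (k + c + h l)`. Past the point where `p` is nonincreasing,
each term `p (k + c + h l)` dominates the `h` masses of the next block of length `h` and is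
dominated by those of the previous block, so `h S k` lies between `P(U > k + c)` and
`P(U > k + c) + h p (k + c)`. Long-tailedness makes `P(U > k + c) / P(U > k) → 1` and
`p (k + c) / P(U > k) → 0`, whence `h S k / P(U > k) → 1`.
-/

open Filter Topology

/-- `P(U > k)` for a ℤ₊-valued random variable with pmf `p`. -/
noncomputable def tail (p : ℕ → ℝ) (k : ℕ) : ℝ := ∑' l : ℕ, p (k + 1 + l)

namespace Antitone

variable {f : ℕ → ℝ} (hf : Antitone f) (hs : Summable f) {h : ℕ} (hh : 0 < h)
include hf hs hh

theorem tsum_succ_le_mul_tsum_mul : ∑' m, f (m + 1) ≤ h * ∑' l, f (h * l) := by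
  have : NeZero h := ⟨hh.ne'⟩
  have hs' : Summable fun m => f (m + 1) := (summable_nat_add_iff 1).mpr hs
  have hmul : Summable fun l => f (h * l) := hs.comp_injective (mul_right_injective₀ hh.ne')
  calc ∑' m, f (m + 1) = ∑ j : ZMod h, ∑' l, f (j.val + h * l + 1) :=
        Nat.sumByResidueClasses hs' h
    _ ≤ ∑ _j : ZMod h, ∑' l, f (h * l) := by
        refine Finset.sum_le_sum fun j _ => ?_
        refine (hs'.comp_injective fun a b hab => ?_).tsum_le_tsum (fun l => hf (by omega)) hmul
        simpa [hh.ne'] using hab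
    _ = h * ∑' l, f (h * l) := by simp

theorem mul_tsum_mul_le : h * ∑' l, f (h * l) ≤ h * f 0 + ∑' m, f (m + 1) := by
  have : NeZero h := ⟨hh.ne'⟩
  have hs' : Summable fun m => f (m + 1) := (summable_nat_add_iff 1).mpr hs
  have hmul : Summable fun l => f (h * l) := hs.comp_injective (mul_right_injective₀ hh.ne')
  have hmul' : Summable fun l => f (h * (l + 1)) := (summable_nat_add_iff 1).mpr hmul
  calc h * ∑' l, f (h * l) = h * f 0 + ∑ _j : ZMod h, ∑' l, f (h * (l + 1)) := by
        rw [hmul.tsum_eq_zero_add]; simp [mul_add]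
    _ ≤ h * f 0 + ∑ j : ZMod h, ∑' l, f (j.val + h * l + 1) := by
        gcongr with j l
        · exact hs'.comp_injective fun a b hab => by simpa [hh.ne'] using hab
        · exact hf (by have := j.val_lt; nlinarith)
    _ = h * f 0 + ∑' m, f (m + 1) := by rw [Nat.sumByResidueClasses hs' h]

end Antitone

theorem tail_eq_add_tail_succ {p : ℕ → ℝ} (hp : Summable p) (k : ℕ) :
    tail p k = p (k + 1) + tail p (k + 1) := by
  have hs : Summable fun l => p (k + 1 + l) := hp.comp_injective (add_right_injective (k + 1))
  rw [tail, hs.tsum_eq_zero_add, tail]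
  simp only [add_zero, add_assoc, add_comm 1]

section LongTailed

variable {p : ℕ → ℝ} (htail : ∀ k, 0 < tail p k)
  (hlt : Tendsto (fun k => tail p (k + 1) / tail p k) atTop (𝓝 1))
include htail hlt

theorem tendsto_tail_add_div_tail (c : ℕ) :
    Tendsto (fun k => tail p (k + c) / tail p k) atTop (𝓝 1) := by
  induction c with
  | zero => simp [div_self (htail _).ne']
  | succ c ih =>
    have hstep := (hlt.comp (tendsto_add_atTop_nat c)).mul ih
    rw [one_mul] at hstep
    refine hstep.congr fun k => ?_
    simp only [Function.comp_apply, ← add_assoc]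
    rw [div_mul_div_cancel₀ (htail _).ne']

theorem tendsto_tail_add_div_tail_add (a b : ℕ) :
    Tendsto (fun k => tail p (k + a) / tail p (k + b)) atTop (𝓝 1) := by
  have hab := (tendsto_tail_add_div_tail htail hlt a).div (tendsto_tail_add_div_tail htail hlt b)
    one_ne_zero
  rw [one_div_one] at hab
  exact hab.congr fun k => div_div_div_cancel_right₀ (htail k).ne' _ _

theorem tendsto_apply_add_div_tail (hp : Summable p) (c : ℕ) :
    Tendsto (fun k => p (k + c) / tail p k) atTop (𝓝 0) := by
  rw [← tendsto_add_atTop_iff_nat 1]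
  have hdiff := (tendsto_tail_add_div_tail_add htail hlt c 1).sub
    (tendsto_tail_add_div_tail_add htail hlt (c + 1) 1)
  rw [sub_self] at hdiff
  refine hdiff.congr fun k => ?_
  rw [← sub_div, tail_eq_add_tail_succ hp (k + c), ← add_assoc, add_sub_cancel_right,
    add_right_comm]

end LongTailed

theorem tail_le_mul_tsum_add_mul {p : ℕ → ℝ} (hp : Summable p) {n h : ℕ} (hh : 0 < h)
    (hanti : Antitone fun m => p (n + m)) :
    tail p n ≤ h * ∑' l, p (n + h * l) ∧
      h * ∑' l, p (n + h * l) ≤ h * p n + tail p n := by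
  have hs : Summable fun m => p (n + m) := hp.comp_injective (add_right_injective n)
  have htail : tail p n = ∑' m, p (n + (m + 1)) :=
    tsum_congr fun m => by rw [add_comm m, add_assoc]
  rw [htail]
  exact ⟨hanti.tsum_succ_le_mul_tsum_mul hs hh, hanti.mul_tsum_mul_le hs hh⟩

theorem stmt2_general (p : ℕ → ℝ) (hsum : HasSum p 1)
    (htail : ∀ k, 0 < tail p k)
    (hlt : Tendsto (fun k => tail p (k + 1) / tail p k) atTop (nhds 1))
    (hdec : ∃ k₀ : ℕ, ∀ k, k₀ ≤ k → p (k + 1) ≤ p k)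
    (h : ℕ) (hh : 0 < h) (l₀ : ℕ) (ν : ℕ) :
    Tendsto (fun k => (∑' l : ℕ, p (k + (l₀ + l) * h + ν)) / tail p k)
      atTop (nhds (1 / (h : ℝ))) := by
  obtain ⟨k₀, hdec⟩ := hdec
  set c := l₀ * h + ν
  have hbounds : ∀ᶠ k in atTop, tail p (k + c) ≤ h * ∑' l, p (k + c + h * l) ∧
      h * ∑' l, p (k + c + h * l) ≤ h * p (k + c) + tail p (k + c) := by
    filter_upwards [eventually_ge_atTop k₀] with k hk
    exact tail_le_mul_tsum_add_mul hsum.summable hh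
      (antitone_nat_of_succ_le fun m => hdec (k + c + m) (by omega))
  have hlim : Tendsto (fun k => (h * ∑' l, p (k + c + h * l)) / tail p k) atTop (𝓝 1) := by
    have hupper := ((tendsto_apply_add_div_tail htail hlt hsum.summable c).const_mul (h : ℝ)).add
      (tendsto_tail_add_div_tail htail hlt c)
    rw [mul_zero, zero_add] at hupper
    refine tendsto_of_tendsto_of_tendsto_of_le_of_le' (tendsto_tail_add_div_tail htail hlt c)
      hupper ?_ ?_
    · filter_upwards [hbounds] with k hk
      exact div_le_div_of_nonneg_right hk.1 (htail k).le
    · filter_upwards [hbounds] with k hk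
      rw [mul_div_assoc', ← add_div]
      exact div_le_div_of_nonneg_right hk.2 (htail k).le
  have hscaled := hlim.const_mul (1 / (h : ℝ))
  rw [mul_one] at hscaled
  refine hscaled.congr fun k => ?_
  rw [mul_div_assoc, ← mul_assoc, one_div_mul_cancel (Nat.cast_ne_zero.mpr hh.ne'), one_mul]
  congr 1
  exact tsum_congr fun l => congrArg p (by ring)

/-- If `U` is long-tailed and its probability mass sequence is eventually nonincreasing,
then for every `h ≥ 1`, `l₀ ∈ ℤ₊` and `ν ∈ {0,…,h-1}`,
`(Σ_{l ≥ l₀} P(U = k + lh + ν)) / P(U > k) → 1/h`. -/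
theorem stmt2 (p : ℕ → ℝ) (hnn : ∀ k, 0 ≤ p k) (hsum : HasSum p 1)
    (htail : ∀ k, 0 < tail p k)
    (hlt : Tendsto (fun k => tail p (k + 1) / tail p k) atTop (nhds 1))
    (hdec : ∃ k₀ : ℕ, ∀ k, k₀ ≤ k → p (k + 1) ≤ p k)
    (h : ℕ) (hh : 0 < h) (l₀ : ℕ) (ν : ℕ) (hν : ν < h) :
    Tendsto (fun k => (∑' l : ℕ, p (k + (l₀ + l) * h + ν)) / tail p k)
      atTop (nhds (1 / (h : ℝ))) :=
  stmt2_general p hsum htail hlt hdec h hh l₀ ν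
end

section
/- Let {P(k); k∈ℤ₊} and {Q(k); k∈ℤ₊} be nonnegative d₀×d₁ and d₁×d₂ matrix sequences with finite sums P = Σ_k P(k) and Q = Σ_k Q(k). Suppose there is a ℤ₊-valued random variable U that is locally subexponential with span one such that P(k)/P(U=k) → P̃ ≥ O and Q(k)/P(U=k) → Q̃ ≥ O elementwise as k → ∞. Then the convolution satisfies lim_{k→∞} (P*Q)(k)/P(U=k) = P̃ Q + P Q̃, where (P*Q)(k) = Σ_{l=0}^{k} P(k−l)Q(l). -/
open Filter Topology

/-- Discrete convolution of two sequences on ℤ₊. -/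
noncomputable def conv (f g : ℕ → ℝ) (k : ℕ) : ℝ :=
  ∑ l ∈ Finset.range (k + 1), f (k - l) * g l

/-- `U ∈ S_loc(1)`: locally subexponential with span one. -/
def SLocOne (q : ℕ → ℝ) : Prop :=
  (∀ᶠ k in atTop, 0 < q k) ∧
    Tendsto (fun k => q (k + 1) / q k) atTop (nhds 1) ∧
    Tendsto (fun k => conv q q k / q k) atTop (nhds 2)

/-- Convolution of two matrix sequences. -/
noncomputable def mconv {d0 d1 d2 : ℕ} (P : ℕ → Matrix (Fin d0) (Fin d1) ℝ)
    (Q : ℕ → Matrix (Fin d1) (Fin d2) ℝ) (k : ℕ) : Matrix (Fin d0) (Fin d2) ℝ :=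
  ∑ l ∈ Finset.range (k + 1), P (k - l) * Q l

/-!
If `f k ~ a q k` and `g k ~ b q k`, split `conv f g k` at a fixed `K`: the `2 (K + 1)` terms
in which one index is at most `K` contribute `a ∑_{l ≤ K} g l + b ∑_{l ≤ K} f l` to the ratio
with `q k`, by local long-tailedness. The remaining middle block is dominated by a constant times the
same block for `conv q q`, whose ratio with `q k` tends to `2 - 2 ∑_{l ≤ K} q l`; this is small
for large `K` since `conv q q k / q k → 2` and `∑ q = 1`. The matrix statement is the scalar one
applied entrywise.
-/

theorem tendsto_of_forall_approx {α β : Type*} [PseudoMetricSpace β] {l : Filter α}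
    {x : α → β} {Y : β}
    (h : ∀ ε > 0, ∃ (y : α → β) (c : β),
      dist c Y < ε ∧ Tendsto y l (𝓝 c) ∧ ∀ᶠ k in l, dist (x k) (y k) < ε) :
    Tendsto x l (𝓝 Y) := by
  refine Metric.tendsto_nhds.2 fun ε hε => ?_
  obtain ⟨y, c, hcY, hy, hxy⟩ := h (ε / 3) (by positivity)
  filter_upwards [hxy, Metric.tendsto_nhds.1 hy (ε / 3) (by positivity)] with k hxyk hyk
  calc dist (x k) Y ≤ dist (x k) (y k) + dist (y k) c + dist c Y := dist_triangle4 _ _ _ _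
    _ < ε := by linarith

def IsLocallyLongTailed (q : ℕ → ℝ) : Prop :=
  (∀ᶠ k in atTop, 0 < q k) ∧ Tendsto (fun k => q (k + 1) / q k) atTop (𝓝 1)

theorem SLocOne.isLocallyLongTailed {q : ℕ → ℝ} (hq : SLocOne q) : IsLocallyLongTailed q :=
  ⟨hq.1, hq.2.1⟩

namespace IsLocallyLongTailed

variable {q : ℕ → ℝ}

theorem tendsto_sub_div (hq : IsLocallyLongTailed q) (l : ℕ) :
    Tendsto (fun k => q (k - l) / q k) atTop (𝓝 1) := by
  induction l with
  | zero => exact tendsto_const_nhds.congr' (hq.1.mono fun k hk => by simp [hk.ne'])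
  | succ l ih =>
    have hstep : Tendsto (fun k => q (k - (l + 1)) / q (k - (l + 1) + 1)) atTop (𝓝 1) := by
      simpa [Function.comp_def] using (hq.2.inv₀ one_ne_zero).comp (tendsto_sub_atTop_nat (l + 1))
    have hpos : ∀ᶠ k in atTop, 0 < q (k - l) := (tendsto_sub_atTop_nat l).eventually hq.1
    refine (mul_one (1 : ℝ) ▸ hstep.mul ih).congr' ?_
    filter_upwards [eventually_gt_atTop l, hpos] with k hkl hk
    rw [show k - (l + 1) + 1 = k - l by omega]
    field_simp

theorem tendsto_comp_sub_div (hq : IsLocallyLongTailed q) {f : ℕ → ℝ} {a : ℝ}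
    (ha : Tendsto (fun k => f k / q k) atTop (𝓝 a)) (l : ℕ) :
    Tendsto (fun k => f (k - l) / q k) atTop (𝓝 a) := by
  refine (mul_one a ▸ (ha.comp (tendsto_sub_atTop_nat l)).mul (hq.tendsto_sub_div l)).congr' ?_
  filter_upwards [(tendsto_sub_atTop_nat l).eventually hq.1] with k hk
  simp only [Function.comp_apply]
  field_simp

theorem eventually_abs_le (hq : IsLocallyLongTailed q) {f : ℕ → ℝ} {a : ℝ}
    (ha : Tendsto (fun k => f k / q k) atTop (𝓝 a)) :
    ∀ᶠ k in atTop, |f k| ≤ (|a| + 1) * q k := by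
  have hlt : ∀ᶠ k in atTop, |f k / q k| < |a| + 1 :=
    ha.abs.eventually_lt_const (lt_add_one _)
  filter_upwards [hlt, hq.1] with k hk hqk
  rw [abs_div, abs_of_pos hqk, div_lt_iff₀ hqk] at hk
  exact hk.le

end IsLocallyLongTailed

noncomputable def convEnds (f g : ℕ → ℝ) (K k : ℕ) : ℝ :=
  ∑ l ∈ Finset.range (K + 1), (f (k - l) * g l + f l * g (k - l))

noncomputable def convMiddle (f g : ℕ → ℝ) (K k : ℕ) : ℝ :=
  ∑ l ∈ Finset.Ico (K + 1) (k - K), f (k - l) * g l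

theorem conv_eq_convEnds_add_convMiddle (f g : ℕ → ℝ) {K k : ℕ} (hk : 2 * K + 1 ≤ k) :
    conv f g k = convEnds f g K k + convMiddle f g K k := by
  have hlast : ∑ l ∈ Finset.Ico (k - K) (k + 1), f (k - l) * g l
      = ∑ l ∈ Finset.range (K + 1), f l * g (k - l) := by
    refine Finset.sum_nbij' (fun l => k - l) (fun l => k - l) ?_ ?_ ?_ ?_ ?_ <;>
      intro l hl <;> simp only [Finset.mem_Ico, Finset.mem_range] at hl ⊢
    all_goals first | omega | rw [Nat.sub_sub_self (by omega)]
  rw [conv, ← Finset.sum_range_add_sum_Ico _ (by omega : K + 1 ≤ k + 1),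
    ← Finset.sum_Ico_consecutive _ (by omega : K + 1 ≤ k - K) (by omega : k - K ≤ k + 1),
    hlast, convEnds, convMiddle, Finset.sum_add_distrib]
  ring

theorem IsLocallyLongTailed.tendsto_convEnds_div {q f g : ℕ → ℝ} (hq : IsLocallyLongTailed q)
    {a b : ℝ} (ha : Tendsto (fun k => f k / q k) atTop (𝓝 a))
    (hb : Tendsto (fun k => g k / q k) atTop (𝓝 b)) (K : ℕ) :
    Tendsto (fun k => convEnds f g K k / q k) atTop
      (𝓝 (∑ l ∈ Finset.range (K + 1), (a * g l + f l * b))) := by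
  have hterm (l : ℕ) : Tendsto (fun k => (f (k - l) * g l + f l * g (k - l)) / q k) atTop
      (𝓝 (a * g l + f l * b)) := by
    refine ((hq.tendsto_comp_sub_div ha l).mul_const (g l)).add
      (((hq.tendsto_comp_sub_div hb l)).const_mul (f l)) |>.congr fun k => ?_
    ring
  simpa only [convEnds, Finset.sum_div] using tendsto_finsetSum _ fun l _ => hterm l

theorem abs_convMiddle_le {q f g : ℕ → ℝ} {A B : ℝ} {n K : ℕ} (hK : n ≤ K)
    (hf : ∀ k ≥ n, |f k| ≤ A * q k) (hg : ∀ k ≥ n, |g k| ≤ B * q k) (k : ℕ) :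
    |convMiddle f g K k| ≤ A * B * convMiddle q q K k := by
  rw [convMiddle, convMiddle, Finset.mul_sum]
  refine (Finset.abs_sum_le_sum_abs _ _).trans (Finset.sum_le_sum fun l hl => ?_)
  rw [Finset.mem_Ico] at hl
  have hfl := hf (k - l) (by omega)
  calc |f (k - l) * g l| = |f (k - l)| * |g l| := abs_mul _ _
    _ ≤ A * q (k - l) * (B * q l) :=
      mul_le_mul hfl (hg l (by omega)) (abs_nonneg _) ((abs_nonneg _).trans hfl)
    _ = A * B * (q (k - l) * q l) := by ring

theorem SLocOne.tendsto_convMiddle_div {q : ℕ → ℝ} (hq : SLocOne q) (K : ℕ) :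
    Tendsto (fun k => convMiddle q q K k / q k) atTop
      (𝓝 (2 - ∑ l ∈ Finset.range (K + 1), (1 * q l + q l * 1))) := by
  have hone : Tendsto (fun k => q k / q k) atTop (𝓝 1) :=
    tendsto_const_nhds.congr' (hq.1.mono fun k hk => (div_self hk.ne').symm)
  refine (hq.2.2.sub (hq.isLocallyLongTailed.tendsto_convEnds_div hone hone K)).congr' ?_
  filter_upwards [eventually_ge_atTop (2 * K + 1)] with k hk
  rw [conv_eq_convEnds_add_convMiddle q q hk]
  ring

theorem tendsto_sum_range_succ_mul_add_mul {f g : ℕ → ℝ} (hf : Summable f) (hg : Summable g)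
    (a b : ℝ) :
    Tendsto (fun K => ∑ l ∈ Finset.range (K + 1), (a * g l + f l * b)) atTop
      (𝓝 (a * ∑' k, g k + (∑' k, f k) * b)) :=
  ((hg.hasSum.mul_left a).add (hf.hasSum.mul_right b)).tendsto_sum_nat.comp
    (tendsto_add_atTop_nat 1)

theorem SLocOne.tendsto_conv_div {q f g : ℕ → ℝ} (hq : SLocOne q) (hq1 : HasSum q 1)
    (hf : Summable f) (hg : Summable g) {a b : ℝ}
    (ha : Tendsto (fun k => f k / q k) atTop (𝓝 a))
    (hb : Tendsto (fun k => g k / q k) atTop (𝓝 b)) :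
    Tendsto (fun k => conv f g k / q k) atTop (𝓝 (a * ∑' k, g k + (∑' k, f k) * b)) := by
  have hlt := hq.isLocallyLongTailed
  set C := (|a| + 1) * (|b| + 1)
  obtain ⟨n, hn⟩ :=
    eventually_atTop.1 ((hlt.eventually_abs_le ha).and (hlt.eventually_abs_le hb))
  have hmiddle : Tendsto (fun K => C * (2 - ∑ l ∈ Finset.range (K + 1), (1 * q l + q l * 1)))
      atTop (𝓝 0) := by
    have := (tendsto_sum_range_succ_mul_add_mul hq1.summable hq1.summable 1 1).const_sub 2
    simpa [hq1.tsum_eq, one_add_one_eq_two] using this.const_mul C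
  refine tendsto_of_forall_approx fun ε hε => ?_
  obtain ⟨K, hKn, hKends, hKmiddle⟩ := ((eventually_ge_atTop n).and
    (((tendsto_sum_range_succ_mul_add_mul hf hg a b).eventually (Metric.ball_mem_nhds _ hε)).and
      (hmiddle.eventually (gt_mem_nhds hε)))).exists
  refine ⟨_, _, hKends, hlt.tendsto_convEnds_div ha hb K, ?_⟩
  filter_upwards [eventually_ge_atTop (2 * K + 1), hq.1,
    ((hq.tendsto_convMiddle_div K).const_mul C).eventually (gt_mem_nhds hKmiddle)]
    with k hk hqk hkmiddle
  rw [Real.dist_eq, conv_eq_convEnds_add_convMiddle f g hk, add_div, add_sub_cancel_left,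
    abs_div, abs_of_pos hqk, div_lt_iff₀ hqk]
  calc |convMiddle f g K k| ≤ C * convMiddle q q K k :=
        abs_convMiddle_le hKn (fun k hk => (hn k hk).1) (fun k hk => (hn k hk).2) k
    _ < ε * q k := by rwa [mul_div_assoc', div_lt_iff₀ hqk] at hkmiddle

theorem mconv_apply {d0 d1 d2 : ℕ} (P : ℕ → Matrix (Fin d0) (Fin d1) ℝ)
    (Q : ℕ → Matrix (Fin d1) (Fin d2) ℝ) (k : ℕ) (i : Fin d0) (j : Fin d2) :
    mconv P Q k i j = ∑ m, conv (fun k => P k i m) (fun k => Q k m j) k := by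
  simp only [mconv, conv, Matrix.sum_apply, Matrix.mul_apply]
  exact Finset.sum_comm

theorem stmt5_general (d0 d1 d2 : ℕ)
    (P : ℕ → Matrix (Fin d0) (Fin d1) ℝ) (Q : ℕ → Matrix (Fin d1) (Fin d2) ℝ)
    (hPsum : ∀ i j, Summable fun k => P k i j)
    (hQsum : ∀ i j, Summable fun k => Q k i j)
    (pU : ℕ → ℝ) (hUsum : HasSum pU 1) (hU : SLocOne pU)
    (Pt : Matrix (Fin d0) (Fin d1) ℝ) (Qt : Matrix (Fin d1) (Fin d2) ℝ)
    (hPl : ∀ i j, Tendsto (fun k => P k i j / pU k) atTop (nhds (Pt i j)))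
    (hQl : ∀ i j, Tendsto (fun k => Q k i j / pU k) atTop (nhds (Qt i j))) :
    ∀ i j, Tendsto (fun k => mconv P Q k i j / pU k) atTop
      (nhds ((Pt * (Matrix.of fun i j => ∑' k, Q k i j)
        + (Matrix.of fun i j => ∑' k, P k i j) * Qt) i j)) := by
  intro i j
  simp only [mconv_apply, Finset.sum_div, Matrix.add_apply, Matrix.mul_apply, Matrix.of_apply,
    ← Finset.sum_add_distrib]
  exact tendsto_finsetSum _ fun m _ =>
    hU.tendsto_conv_div hUsum (hPsum i m) (hQsum m j) (hPl i m) (hQl m j)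

/-- Convolution asymptotics for matrix sequences whose entries are asymptotically
proportional to a locally subexponential pmf (Proposition A.7 of the paper). -/
theorem stmt5 (d0 d1 d2 : ℕ)
    (P : ℕ → Matrix (Fin d0) (Fin d1) ℝ) (Q : ℕ → Matrix (Fin d1) (Fin d2) ℝ)
    (hPnn : ∀ k i j, 0 ≤ P k i j) (hQnn : ∀ k i j, 0 ≤ Q k i j)
    (hPsum : ∀ i j, Summable fun k => P k i j)
    (hQsum : ∀ i j, Summable fun k => Q k i j)
    (pU : ℕ → ℝ) (hUnn : ∀ k, 0 ≤ pU k) (hUsum : HasSum pU 1) (hU : SLocOne pU)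
    (Pt : Matrix (Fin d0) (Fin d1) ℝ) (Qt : Matrix (Fin d1) (Fin d2) ℝ)
    (hPtnn : ∀ i j, 0 ≤ Pt i j) (hQtnn : ∀ i j, 0 ≤ Qt i j)
    (hPl : ∀ i j, Tendsto (fun k => P k i j / pU k) atTop (nhds (Pt i j)))
    (hQl : ∀ i j, Tendsto (fun k => Q k i j / pU k) atTop (nhds (Qt i j))) :
    ∀ i j, Tendsto (fun k => mconv P Q k i j / pU k) atTop
      (nhds ((Pt * (Matrix.of fun i j => ∑' k, Q k i j)
        + (Matrix.of fun i j => ∑' k, P k i j) * Qt) i j)) :=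
  stmt5_general d0 d1 d2 P Q hPsum hQsum pU hUsum hU Pt Qt hPl hQl
end
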